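/- arXiv:2403.06246 — 7 statements merged into one kernel-verified Lean document; each statement's English description precedes it below -/
import Mathlib

section
/- Let p ≥ 1 be an integer, q ∈ [0,1), ζ > 0, c > 0, C̄ ≥ 2c and S ≥ 0. Let (σ_{ij})_{1≤i,j≤p} and (σ̌_{ij})_{1≤i,j≤p} be real arrays such that |σ̌_{ij} − σ_{ij}| ≤ c ζ for all i, j, and such that (σ_{ij}) is (q,S)-row-sparse. Let ρ be a real number with 2cζ ≤ ρ ≤ C̄ ζ and let s_ρ be a shrinkage function with tuning parameter ρ. Then max_{1≤i≤p} ∑_{j=1}^p |s_ρ(σ̌_{ij}) − σ_{ij}| ≤ ( (C̄ + c) c^{−q} + (C̄ + c)^{1−q} ) · S · ζ^{1−q}. -/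
/-- `s` is a shrinkage function with tuning parameter `ρ`:
(i) `|s u| ≤ |u|`, (ii) `s u = 0` whenever `|u| ≤ ρ`, (iii) `|s u - u| ≤ ρ`. -/
def IsShrinkage (ρ : ℝ) (s : ℝ → ℝ) : Prop :=
  (∀ u : ℝ, |s u| ≤ |u|) ∧ (∀ u : ℝ, |u| ≤ ρ → s u = 0) ∧ (∀ u : ℝ, |s u - u| ≤ ρ)

/-- A `p × p` real array is `(q, S)`-row-sparse if every row satisfies
`∑ j |σ i j| ^ q ≤ S` (real power, with the convention `0 ^ 0 = 1`). -/
def RowSparse {p : ℕ} (q S : ℝ) (σ : Fin p → Fin p → ℝ) : Prop :=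
  ∀ i : Fin p, ∑ j : Fin p, |σ i j| ^ q ≤ S


/-!
An entry with `|σᵢⱼ| ≤ cζ` is killed by the shrinkage, since then `|σ̌ᵢⱼ| ≤ 2cζ ≤ ρ`, so its error
is `|σᵢⱼ|`; any other entry has error at most `ρ + cζ`. In both cases the error is at most
`(ρ + cζ) / (cζ) · min (|σᵢⱼ|, cζ)`, and `min (x, t) ≤ x ^ q t ^ (1 - q)` turns this into
`(C̄ + c) c ^ (-q) ζ ^ (1 - q) |σᵢⱼ| ^ q`; summing over a row and using row sparsity gives the bound.
-/

open Finset

lemma min_le_rpow_mul_rpow {x t q : ℝ} (hx : 0 ≤ x) (ht : 0 ≤ t) (hq0 : 0 ≤ q) (hq1 : q ≤ 1) :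
    min x t ≤ x ^ q * t ^ (1 - q) := by
  rcases le_total x t with hxt | htx
  · rw [min_eq_left hxt]
    rcases hx.eq_or_lt with rfl | hx
    · positivity
    calc x = x ^ q * x ^ (1 - q) := by rw [← Real.rpow_add hx, add_sub_cancel, Real.rpow_one]
      _ ≤ x ^ q * t ^ (1 - q) := by gcongr
  · rw [min_eq_right htx]
    rcases ht.eq_or_lt with rfl | ht
    · positivity
    calc t = t ^ q * t ^ (1 - q) := by rw [← Real.rpow_add ht, add_sub_cancel, Real.rpow_one]
      _ ≤ x ^ q * t ^ (1 - q) := by gcongr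

namespace IsShrinkage

variable {ρ δ x y : ℝ} {s : ℝ → ℝ}

lemma mul_abs_sub_le (hs : IsShrinkage ρ s) (hxy : |y - x| ≤ δ) (hδρ : 2 * δ ≤ ρ) :
    δ * |s y - x| ≤ (ρ + δ) * min |x| δ := by
  obtain ⟨-, hs_zero, hs_close⟩ := hs
  have hδ : 0 ≤ δ := (abs_nonneg _).trans hxy
  rcases le_total |x| δ with hsmall | hlarge
  · have hy : |y| ≤ ρ := by
      calc |y| = |(y - x) + x| := by rw [sub_add_cancel]
        _ ≤ |y - x| + |x| := abs_add_le _ _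
        _ ≤ ρ := by linarith
    rw [hs_zero y hy, zero_sub, abs_neg, min_eq_left hsmall]
    nlinarith [abs_nonneg x]
  · have herr : |s y - x| ≤ ρ + δ := by
      calc |s y - x| = |(s y - y) + (y - x)| := by rw [sub_add_sub_cancel]
        _ ≤ |s y - y| + |y - x| := abs_add_le _ _
        _ ≤ ρ + δ := add_le_add (hs_close y) hxy
    rw [min_eq_right hlarge, mul_comm]
    exact mul_le_mul_of_nonneg_right herr hδ

lemma abs_sub_le_rpow {q : ℝ} (hs : IsShrinkage ρ s) (hxy : |y - x| ≤ δ) (hδρ : 2 * δ ≤ ρ)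
    (hδ : 0 < δ) (hq0 : 0 ≤ q) (hq1 : q ≤ 1) :
    |s y - x| ≤ (ρ + δ) * δ ^ (-q) * |x| ^ q := by
  have hρδ : 0 ≤ ρ + δ := by linarith
  refine le_of_mul_le_mul_left ?_ hδ
  calc δ * |s y - x| ≤ (ρ + δ) * min |x| δ := hs.mul_abs_sub_le hxy hδρ
    _ ≤ (ρ + δ) * (|x| ^ q * δ ^ (1 - q)) := by
        gcongr; exact min_le_rpow_mul_rpow (abs_nonneg x) hδ.le hq0 hq1
    _ = δ * ((ρ + δ) * δ ^ (-q) * |x| ^ q) := by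
        rw [sub_eq_add_neg, Real.rpow_add hδ, Real.rpow_one]; ring

end IsShrinkage

theorem shrinkage_row_bound_general
    (p : ℕ) (q : ℝ) (hq0 : 0 ≤ q) (hq1 : q < 1)
    (ζ c Cbar S : ℝ) (hζ : 0 < ζ) (hc : 0 < c) (hS : 0 ≤ S)
    (σ σcheck : Fin p → Fin p → ℝ)
    (hclose : ∀ i j, |σcheck i j - σ i j| ≤ c * ζ)
    (hsparse : RowSparse q S σ)
    (ρ : ℝ) (hρ1 : 2 * c * ζ ≤ ρ) (hρ2 : ρ ≤ Cbar * ζ)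
    (s : ℝ → ℝ) (hs : IsShrinkage ρ s) :
    ∀ i : Fin p, ∑ j : Fin p, |s (σcheck i j) - σ i j| ≤
      ((Cbar + c) * c ^ (-q) + (Cbar + c) ^ (1 - q)) * S * ζ ^ (1 - q) := by
  intro i
  have hCc : 0 ≤ Cbar + c := by nlinarith
  set A := (Cbar + c) * c ^ (-q) * ζ ^ (1 - q) with hA_def
  have hentry : ∀ j, |s (σcheck i j) - σ i j| ≤ A * |σ i j| ^ q := fun j => by
    refine (hs.abs_sub_le_rpow (hclose i j) (by linarith) (by positivity) hq0 hq1.le).trans ?_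
    have hA : (Cbar + c) * ζ * (c * ζ) ^ (-q) = A := by
      rw [hA_def, Real.mul_rpow hc.le hζ.le, sub_eq_add_neg, Real.rpow_add hζ, Real.rpow_one]; ring
    rw [← hA]
    gcongr
    linarith
  calc ∑ j, |s (σcheck i j) - σ i j| ≤ ∑ j, A * |σ i j| ^ q := sum_le_sum fun j _ => hentry j
    _ = A * ∑ j, |σ i j| ^ q := (mul_sum _ _ _).symm
    _ ≤ A * S := by gcongr; exact hsparse i
    _ ≤ ((Cbar + c) * c ^ (-q) + (Cbar + c) ^ (1 - q)) * S * ζ ^ (1 - q) := by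
        have : 0 ≤ (Cbar + c) ^ (1 - q) * S * ζ ^ (1 - q) := by positivity
        linarith

theorem shrinkage_row_bound
    (p : ℕ) (hp : 1 ≤ p) (q : ℝ) (hq0 : 0 ≤ q) (hq1 : q < 1)
    (ζ c Cbar S : ℝ) (hζ : 0 < ζ) (hc : 0 < c) (hCbar : 2 * c ≤ Cbar) (hS : 0 ≤ S)
    (σ σcheck : Fin p → Fin p → ℝ)
    (hclose : ∀ i j, |σcheck i j - σ i j| ≤ c * ζ)
    (hsparse : RowSparse q S σ)
    (ρ : ℝ) (hρ1 : 2 * c * ζ ≤ ρ) (hρ2 : ρ ≤ Cbar * ζ)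
    (s : ℝ → ℝ) (hs : IsShrinkage ρ s) :
    ∀ i : Fin p, ∑ j : Fin p, |s (σcheck i j) - σ i j| ≤
      ((Cbar + c) * c ^ (-q) + (Cbar + c) ^ (1 - q)) * S * ζ ^ (1 - q) :=
  shrinkage_row_bound_general p q hq0 hq1 ζ c Cbar S hζ hc hS σ σcheck hclose hsparse ρ hρ1 hρ2 s hs
end

section
/- Let p ≥ 1 be an integer, q ∈ [0,1), ζ > 0, c > 0, C̄ ≥ 2c and S ≥ 0. Let (σ_{ij})_{1≤i,j≤p} and (σ̌_{ij})_{1≤i,j≤p} be real arrays such that |σ̌_{ij} − σ_{ij}| ≤ c ζ for all i, j, and such that (σ_{ij}) is (q,S)-row-sparse. Let ρ be a real number with 2cζ ≤ ρ ≤ C̄ ζ and let s_ρ be a shrinkage function with tuning parameter ρ. Then max_{1≤i≤p} ∑_{j=1}^p ( |s_ρ(σ̌_{ij}) − σ̌_{ij}| + |σ̌_{ij} − σ_{ij}| ) · 1{|σ̌_{ij}| > ρ} ≤ (C̄ + c) c^{−q} · S · ζ^{1−q}. -/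
lemma le_mul_rpow_div_of_le {a t x q : ℝ} (ha : 0 ≤ a) (ht : 0 < t) (htx : t ≤ x) (hq : 0 ≤ q) :
    a ≤ a * (x / t) ^ q := by
  have h : 1 ≤ (x / t) ^ q := Real.one_le_rpow ((one_le_div ht).2 htx) hq
  nlinarith

lemma lt_abs_of_abs_sub_le_of_two_mul_lt_abs {u v δ ρ : ℝ} (hclose : |u - v| ≤ δ)
    (hρ : 2 * δ ≤ ρ) (hu : ρ < |u|) : δ < |v| := by
  have := abs_sub_abs_le_abs_sub u v
  linarith

namespace IsShrinkage

variable {ρ δ M q : ℝ} {s : ℝ → ℝ}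

lemma ite_error_le (hs : IsShrinkage ρ s) {u v : ℝ} (hδ : 0 < δ) (hρ : 2 * δ ≤ ρ)
    (hM : ρ + δ ≤ M) (hq : 0 ≤ q) (hclose : |u - v| ≤ δ) :
    (if ρ < |u| then |s u - u| + |u - v| else 0) ≤ M * (|v| / δ) ^ q := by
  have hM0 : 0 ≤ M := by linarith
  split_ifs with hu
  · have hv : δ < |v| := lt_abs_of_abs_sub_le_of_two_mul_lt_abs hclose hρ hu
    calc |s u - u| + |u - v| ≤ M := by linarith [hs.2.2 u]
      _ ≤ M * (|v| / δ) ^ q := le_mul_rpow_div_of_le hM0 hδ hv.le hq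
  · exact mul_nonneg hM0 (Real.rpow_nonneg (div_nonneg (abs_nonneg v) hδ.le) q)

lemma sum_ite_error_le {ι : Type*} [Fintype ι] (hs : IsShrinkage ρ s) {u v : ι → ℝ} {S : ℝ}
    (hδ : 0 < δ) (hρ : 2 * δ ≤ ρ) (hM : ρ + δ ≤ M) (hq : 0 ≤ q)
    (hclose : ∀ j, |u j - v j| ≤ δ) (hsparse : ∑ j, |v j| ^ q ≤ S) :
    ∑ j, (if ρ < |u j| then |s (u j) - u j| + |u j - v j| else 0) ≤ M * δ ^ (-q) * S := by
  have hMδ : 0 ≤ M * δ ^ (-q) := mul_nonneg (by linarith) (Real.rpow_nonneg hδ.le _)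
  calc ∑ j, (if ρ < |u j| then |s (u j) - u j| + |u j - v j| else 0)
      ≤ ∑ j, M * (|v j| / δ) ^ q :=
        Finset.sum_le_sum fun j _ => hs.ite_error_le hδ hρ hM hq (hclose j)
    _ = M * δ ^ (-q) * ∑ j, |v j| ^ q := by
        rw [Finset.mul_sum]
        refine Finset.sum_congr rfl fun j _ => ?_
        rw [Real.div_rpow (abs_nonneg _) hδ.le, Real.rpow_neg hδ.le]
        ring
    _ ≤ M * δ ^ (-q) * S := mul_le_mul_of_nonneg_left hsparse hMδ

end IsShrinkage

theorem shrinkage_row_bound_large_entries_general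
    (p : ℕ) (q : ℝ) (hq0 : 0 ≤ q)
    (ζ c Cbar S : ℝ) (hζ : 0 < ζ) (hc : 0 < c)
    (σ σcheck : Fin p → Fin p → ℝ)
    (hclose : ∀ i j, |σcheck i j - σ i j| ≤ c * ζ)
    (hsparse : RowSparse q S σ)
    (ρ : ℝ) (hρ1 : 2 * c * ζ ≤ ρ) (hρ2 : ρ ≤ Cbar * ζ)
    (s : ℝ → ℝ) (hs : IsShrinkage ρ s) :
    ∀ i : Fin p, ∑ j : Fin p,
        (if ρ < |σcheck i j| then |s (σcheck i j) - σcheck i j| + |σcheck i j - σ i j| else 0) ≤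
      (Cbar + c) * c ^ (-q) * S * ζ ^ (1 - q) := by
  intro i
  have hbound := hs.sum_ite_error_le (M := (Cbar + c) * ζ) (mul_pos hc hζ) (by linarith)
    (by linarith) hq0 (hclose i) (hsparse i)
  have hscale : (Cbar + c) * ζ * (c * ζ) ^ (-q) * S = (Cbar + c) * c ^ (-q) * S * ζ ^ (1 - q) := by
    rw [Real.mul_rpow hc.le hζ.le, sub_eq_add_neg, Real.rpow_add hζ, Real.rpow_one]
    ring
  exact hscale ▸ hbound

theorem shrinkage_row_bound_large_entries
    (p : ℕ) (hp : 1 ≤ p) (q : ℝ) (hq0 : 0 ≤ q) (hq1 : q < 1)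
    (ζ c Cbar S : ℝ) (hζ : 0 < ζ) (hc : 0 < c) (hCbar : 2 * c ≤ Cbar) (hS : 0 ≤ S)
    (σ σcheck : Fin p → Fin p → ℝ)
    (hclose : ∀ i j, |σcheck i j - σ i j| ≤ c * ζ)
    (hsparse : RowSparse q S σ)
    (ρ : ℝ) (hρ1 : 2 * c * ζ ≤ ρ) (hρ2 : ρ ≤ Cbar * ζ)
    (s : ℝ → ℝ) (hs : IsShrinkage ρ s) :
    ∀ i : Fin p, ∑ j : Fin p,
        (if ρ < |σcheck i j| then |s (σcheck i j) - σcheck i j| + |σcheck i j - σ i j| else 0) ≤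
      (Cbar + c) * c ^ (-q) * S * ζ ^ (1 - q) :=
  shrinkage_row_bound_large_entries_general p q hq0 ζ c Cbar S hζ hc σ σcheck hclose hsparse ρ hρ1
    hρ2 s hs
end

section
/- Let p ≥ 1 be an integer, q ∈ [0,1), ζ > 0, c > 0, C̄ > 0 and S ≥ 0. Let (σ_{ij})_{1≤i,j≤p} and (σ̌_{ij})_{1≤i,j≤p} be real arrays such that |σ̌_{ij} − σ_{ij}| ≤ c ζ for all i, j, and such that (σ_{ij}) is (q,S)-row-sparse. Let ρ be a real number with 0 < ρ ≤ C̄ ζ. Then max_{1≤i≤p} ∑_{j=1}^p |σ_{ij}| · 1{|σ̌_{ij}| ≤ ρ} ≤ (C̄ + c)^{1−q} · S · ζ^{1−q}. -/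
/-!
On the small entries `|σ̌ i j| ≤ ρ` the closeness of `σ̌` to `σ` gives `|σ i j| ≤ ρ + cζ ≤ (C̄ + c)ζ`,
and any `0 ≤ x ≤ M` satisfies `x = x ^ (1 - q) x ^ q ≤ M ^ (1 - q) x ^ q`; summing along a row and
using row sparsity bounds the row by `((C̄ + c)ζ) ^ (1 - q) S`.
-/

open Finset

theorem Real.le_rpow_one_sub_mul_rpow {x M q : ℝ} (hx : 0 ≤ x) (hxM : x ≤ M) (hq : q ≤ 1) :
    x ≤ M ^ (1 - q) * x ^ q := by
  rcases hx.eq_or_lt with rfl | hx_pos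
  · exact mul_nonneg (Real.rpow_nonneg hxM _) (Real.rpow_nonneg le_rfl _)
  calc x = x ^ (1 - q) * x ^ q := by rw [← Real.rpow_add hx_pos]; simp
    _ ≤ M ^ (1 - q) * x ^ q := by gcongr

theorem sum_ite_abs_le_rpow_mul_sum_rpow {ι : Type*} [Fintype ι] {P : ι → Prop}
    [DecidablePred P] {a : ι → ℝ} {M q : ℝ} (hM : 0 ≤ M) (hq : q ≤ 1)
    (hP : ∀ j, P j → |a j| ≤ M) :
    ∑ j, (if P j then |a j| else 0) ≤ M ^ (1 - q) * ∑ j, |a j| ^ q := by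
  rw [mul_sum]
  refine sum_le_sum fun j _ => ?_
  split_ifs with hj
  · exact Real.le_rpow_one_sub_mul_rpow (abs_nonneg _) (hP j hj) hq
  · exact mul_nonneg (Real.rpow_nonneg hM _) (Real.rpow_nonneg (abs_nonneg _) _)

theorem abs_le_of_abs_le_of_abs_sub_le {x y ρ ε : ℝ} (hy : |y| ≤ ρ) (hxy : |y - x| ≤ ε) :
    |x| ≤ ρ + ε := by
  linarith [abs_sub_abs_le_abs_sub x y, abs_sub_comm x y]

theorem sparse_row_bound_small_entries_general
    (p : ℕ) (q : ℝ) (hq1 : q < 1)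
    (ζ c Cbar S : ℝ) (hζ : 0 < ζ) (hc : 0 < c) (hCbar : 0 < Cbar)
    (σ σcheck : Fin p → Fin p → ℝ)
    (hclose : ∀ i j, |σcheck i j - σ i j| ≤ c * ζ)
    (hsparse : RowSparse q S σ)
    (ρ : ℝ) (hρ2 : ρ ≤ Cbar * ζ) :
    ∀ i : Fin p, ∑ j : Fin p, (if |σcheck i j| ≤ ρ then |σ i j| else 0) ≤
      (Cbar + c) ^ (1 - q) * S * ζ ^ (1 - q) := by
  intro i
  have hM : 0 ≤ (Cbar + c) * ζ := by positivity
  have hsmall : ∀ j, |σcheck i j| ≤ ρ → |σ i j| ≤ (Cbar + c) * ζ := fun j hj => by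
    have := abs_le_of_abs_le_of_abs_sub_le hj (hclose i j)
    linarith
  calc ∑ j, (if |σcheck i j| ≤ ρ then |σ i j| else 0)
      ≤ ((Cbar + c) * ζ) ^ (1 - q) * ∑ j, |σ i j| ^ q :=
        sum_ite_abs_le_rpow_mul_sum_rpow hM hq1.le hsmall
    _ ≤ ((Cbar + c) * ζ) ^ (1 - q) * S := by gcongr; exact hsparse i
    _ = (Cbar + c) ^ (1 - q) * S * ζ ^ (1 - q) := by
        rw [Real.mul_rpow (by positivity) hζ.le]; ring

theorem sparse_row_bound_small_entries
    (p : ℕ) (hp : 1 ≤ p) (q : ℝ) (hq0 : 0 ≤ q) (hq1 : q < 1)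
    (ζ c Cbar S : ℝ) (hζ : 0 < ζ) (hc : 0 < c) (hCbar : 0 < Cbar) (hS : 0 ≤ S)
    (σ σcheck : Fin p → Fin p → ℝ)
    (hclose : ∀ i j, |σcheck i j - σ i j| ≤ c * ζ)
    (hsparse : RowSparse q S σ)
    (ρ : ℝ) (hρ1 : 0 < ρ) (hρ2 : ρ ≤ Cbar * ζ) :
    ∀ i : Fin p, ∑ j : Fin p, (if |σcheck i j| ≤ ρ then |σ i j| else 0) ≤
      (Cbar + c) ^ (1 - q) * S * ζ ^ (1 - q) :=
  sparse_row_bound_small_entries_general p q hq1 ζ c Cbar S hζ hc hCbar σ σcheck hclose hsparse ρ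
    hρ2
end

section
/- Let p ≥ 1 be an integer, q ∈ [0,1), ζ > 0, c > 0, C̄ ≥ 2c and S ≥ 0. Let (σ_{ij})_{1≤i,j≤p} and (σ̌_{ij})_{1≤i,j≤p} be real arrays that are symmetric (σ_{ij} = σ_{ji} and σ̌_{ij} = σ̌_{ji} for all i, j), such that |σ̌_{ij} − σ_{ij}| ≤ c ζ for all i, j, and such that (σ_{ij}) is (q,S)-row-sparse. Let ρ be a real number with 2cζ ≤ ρ ≤ C̄ ζ and let s_ρ be a shrinkage function with tuning parameter ρ. Then the spectral norm of the p×p matrix with (i,j)-entry s_ρ(σ̌_{ij}) − σ_{ij} is at most ( (C̄ + c) c^{−q} + (C̄ + c)^{1−q} ) · S · ζ^{1−q}. -/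
open scoped Matrix.Norms.L2Operator

/-!
An entry of the error matrix equals `|σ i j|` when `|σ i j| ≤ c ζ` (the estimate `σcheck i j` is
then at most `2 c ζ ≤ ρ` in absolute value, so it is shrunk to `0`) and is at most
`ρ + c ζ ≤ (C̄ + c) ζ` otherwise. In both cases it is at most `(C̄ + c) / c · min(|σ i j|, c ζ)`,
and interpolating the minimum gives `(C̄ + c) c^{-q} ζ^{1-q} |σ i j|^q`. Row sparsity then bounds
every row sum of the symmetric error matrix by `(C̄ + c) c^{-q} ζ^{1-q} S`, and the Schur test
bounds its spectral norm by the same quantity.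
-/

open Finset

namespace Matrix

variable {𝕜 m n : Type*} [RCLike 𝕜] [Fintype n]

theorem norm_mulVec_sq_le (A : Matrix m n 𝕜) (x : n → 𝕜) (i : m) :
    ‖(A *ᵥ x) i‖ ^ 2 ≤ (∑ j, ‖A i j‖) * ∑ j, ‖A i j‖ * ‖x j‖ ^ 2 :=
  calc ‖(A *ᵥ x) i‖ ^ 2 ≤ (∑ j, ‖A i j‖ * ‖x j‖) ^ 2 := by
        gcongr
        simpa only [mulVec, dotProduct, norm_mul] using norm_sum_le univ fun j => A i j * x j
    _ ≤ _ := sum_sq_le_sum_mul_sum_of_sq_le_mul _ (fun _ _ => norm_nonneg _)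
        (fun _ _ => by positivity) fun j _ => by rw [mul_pow, sq, mul_assoc]

theorem sum_norm_mulVec_sq_le [Fintype m] (A : Matrix m n 𝕜) {R C : ℝ} (hR : 0 ≤ R)
    (hrow : ∀ i, ∑ j, ‖A i j‖ ≤ R) (hcol : ∀ j, ∑ i, ‖A i j‖ ≤ C) (x : n → 𝕜) :
    ∑ i, ‖(A *ᵥ x) i‖ ^ 2 ≤ R * C * ∑ j, ‖x j‖ ^ 2 :=
  calc ∑ i, ‖(A *ᵥ x) i‖ ^ 2 ≤ ∑ i, R * ∑ j, ‖A i j‖ * ‖x j‖ ^ 2 := by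
        gcongr with i
        exact (norm_mulVec_sq_le A x i).trans (by gcongr; exact hrow i)
    _ = R * ∑ j, (∑ i, ‖A i j‖) * ‖x j‖ ^ 2 := by
        simp_rw [← mul_sum, sum_mul]; rw [sum_comm]
    _ ≤ R * ∑ j, C * ‖x j‖ ^ 2 := by gcongr with j; exact hcol j
    _ = R * C * ∑ j, ‖x j‖ ^ 2 := by rw [← mul_sum, mul_assoc]

/-- **Schur test**. -/
theorem l2_opNorm_le_sqrt_mul [Fintype m] [DecidableEq n] (A : Matrix m n 𝕜) {R C : ℝ}
    (hrow : ∀ i, ∑ j, ‖A i j‖ ≤ R) (hcol : ∀ j, ∑ i, ‖A i j‖ ≤ C) : ‖A‖ ≤ √(R * C) := by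
  rcases isEmpty_or_nonempty m with hm | ⟨⟨i₀⟩⟩
  · simp [Subsingleton.elim A 0]
  have hR : 0 ≤ R := (sum_nonneg fun j _ => norm_nonneg (A i₀ j)).trans (hrow i₀)
  rw [l2_opNorm_def]
  refine ContinuousLinearMap.opNorm_le_bound _ (Real.sqrt_nonneg _) fun x => ?_
  rw [EuclideanSpace.norm_eq, EuclideanSpace.norm_eq, ← Real.sqrt_mul' _ (by positivity)]
  exact Real.sqrt_le_sqrt (sum_norm_mulVec_sq_le A hR hrow hcol x.ofLp)

theorem IsHermitian.l2_opNorm_le [DecidableEq n] {A : Matrix n n 𝕜} (hA : A.IsHermitian)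
    {R : ℝ} (hR : 0 ≤ R) (hrow : ∀ i, ∑ j, ‖A i j‖ ≤ R) : ‖A‖ ≤ R := by
  have hcol : ∀ j, ∑ i, ‖A i j‖ ≤ R := fun j => by
    simpa only [← hA.apply j, norm_star] using hrow j
  simpa [Real.sqrt_mul_self hR] using l2_opNorm_le_sqrt_mul A hrow hcol

end Matrix

theorem Real.min_le_rpow_one_sub_mul_rpow {t a q : ℝ} (ht : 0 ≤ t) (ha : 0 ≤ a) (hq0 : 0 ≤ q)
    (hq1 : q ≤ 1) : min t a ≤ a ^ (1 - q) * t ^ q := by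
  have hsplit : ∀ x : ℝ, 0 ≤ x → x = x ^ (1 - q) * x ^ q := fun x hx => by
    rw [← Real.rpow_add' hx (by norm_num), sub_add_cancel, Real.rpow_one]
  rcases le_total t a with hta | hat
  · calc min t a = t ^ (1 - q) * t ^ q := by rw [min_eq_left hta, ← hsplit t ht]
      _ ≤ a ^ (1 - q) * t ^ q := by gcongr
  · calc min t a = a ^ (1 - q) * a ^ q := by rw [min_eq_right hat, ← hsplit a ha]
      _ ≤ a ^ (1 - q) * t ^ q := by gcongr

namespace IsShrinkage

variable {ρ δ : ℝ} {s : ℝ → ℝ}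

theorem abs_apply_sub_le_div_mul_min (hs : IsShrinkage ρ s) (hδ : 0 < δ) (hρ : 2 * δ ≤ ρ)
    {x y : ℝ} (hxy : |y - x| ≤ δ) : |s y - x| ≤ (ρ + δ) / δ * min |x| δ := by
  obtain ⟨-, hs_zero, hs_near⟩ := hs
  rcases le_total |x| δ with hx | hx
  · have hy : |y| ≤ ρ := by
      have := abs_sub_abs_le_abs_sub y x
      linarith
    rw [hs_zero y hy, zero_sub, abs_neg, min_eq_left hx]
    exact le_mul_of_one_le_left (abs_nonneg x) ((one_le_div hδ).2 (by linarith))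
  · rw [min_eq_right hx, div_mul_cancel₀ _ hδ.ne']
    calc |s y - x| ≤ |s y - y| + |y - x| := abs_sub_le _ _ _
      _ ≤ ρ + δ := add_le_add (hs_near y) hxy

theorem abs_apply_sub_le_rpow (hs : IsShrinkage ρ s) {c ζ Cbar q : ℝ} (hc : 0 < c) (hζ : 0 < ζ)
    (hq0 : 0 ≤ q) (hq1 : q ≤ 1) (hρ1 : 2 * c * ζ ≤ ρ) (hρ2 : ρ ≤ Cbar * ζ) {x y : ℝ}
    (hxy : |y - x| ≤ c * ζ) : |s y - x| ≤ (Cbar + c) * c ^ (-q) * ζ ^ (1 - q) * |x| ^ q := by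
  have hcζ : 0 < c * ζ := mul_pos hc hζ
  have hρδ : ρ + c * ζ ≤ (Cbar + c) * ζ := by linarith
  calc |s y - x| ≤ (ρ + c * ζ) / (c * ζ) * min |x| (c * ζ) :=
        hs.abs_apply_sub_le_div_mul_min hcζ (by linarith) hxy
    _ ≤ (Cbar + c) * ζ / (c * ζ) * ((c * ζ) ^ (1 - q) * |x| ^ q) := by
        refine mul_le_mul (by gcongr) ?_ (by positivity) (div_nonneg (by linarith) hcζ.le)
        exact Real.min_le_rpow_one_sub_mul_rpow (abs_nonneg x) hcζ.le hq0 hq1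
    _ = (Cbar + c) * c ^ (-q) * ζ ^ (1 - q) * |x| ^ q := by
        rw [Real.mul_rpow hc.le hζ.le, Real.rpow_sub hc, Real.rpow_one, Real.rpow_neg hc.le]
        field_simp

end IsShrinkage

theorem shrinkage_spectral_norm_bound_general
    (p : ℕ) (q : ℝ) (hq0 : 0 ≤ q) (hq1 : q < 1)
    (ζ c Cbar S : ℝ) (hζ : 0 < ζ) (hc : 0 < c) (hS : 0 ≤ S)
    (σ σcheck : Fin p → Fin p → ℝ)
    (hσsymm : ∀ i j, σ i j = σ j i)
    (hσchecksymm : ∀ i j, σcheck i j = σcheck j i)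
    (hclose : ∀ i j, |σcheck i j - σ i j| ≤ c * ζ)
    (hsparse : RowSparse q S σ)
    (ρ : ℝ) (hρ1 : 2 * c * ζ ≤ ρ) (hρ2 : ρ ≤ Cbar * ζ)
    (s : ℝ → ℝ) (hs : IsShrinkage ρ s) :
    ‖(Matrix.of fun i j : Fin p => s (σcheck i j) - σ i j)‖ ≤
      ((Cbar + c) * c ^ (-q) + (Cbar + c) ^ (1 - q)) * S * ζ ^ (1 - q) := by
  set L := (Cbar + c) * c ^ (-q) * ζ ^ (1 - q)
  have hCc : 0 ≤ Cbar + c := by nlinarith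
  have hL : 0 ≤ L := by positivity
  have hherm : (Matrix.of fun i j : Fin p => s (σcheck i j) - σ i j).IsHermitian :=
    Matrix.IsHermitian.ext fun i j => by simp [hσsymm i j, hσchecksymm i j]
  calc ‖(Matrix.of fun i j : Fin p => s (σcheck i j) - σ i j)‖ ≤ L * S :=
        hherm.l2_opNorm_le (mul_nonneg hL hS) fun i => calc
          ∑ j, |s (σcheck i j) - σ i j| ≤ ∑ j, L * |σ i j| ^ q := by
            gcongr with j
            exact hs.abs_apply_sub_le_rpow hc hζ hq0 hq1.le hρ1 hρ2 (hclose i j)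
          _ ≤ L * S := by rw [← mul_sum]; exact mul_le_mul_of_nonneg_left (hsparse i) hL
    _ ≤ ((Cbar + c) * c ^ (-q) + (Cbar + c) ^ (1 - q)) * S * ζ ^ (1 - q) := by
        rw [show L * S = (Cbar + c) * c ^ (-q) * S * ζ ^ (1 - q) by ring]
        gcongr
        exact le_add_of_nonneg_right (Real.rpow_nonneg hCc _)

theorem shrinkage_spectral_norm_bound
    (p : ℕ) (hp : 1 ≤ p) (q : ℝ) (hq0 : 0 ≤ q) (hq1 : q < 1)
    (ζ c Cbar S : ℝ) (hζ : 0 < ζ) (hc : 0 < c) (hCbar : 2 * c ≤ Cbar) (hS : 0 ≤ S)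
    (σ σcheck : Fin p → Fin p → ℝ)
    (hσsymm : ∀ i j, σ i j = σ j i)
    (hσchecksymm : ∀ i j, σcheck i j = σcheck j i)
    (hclose : ∀ i j, |σcheck i j - σ i j| ≤ c * ζ)
    (hsparse : RowSparse q S σ)
    (ρ : ℝ) (hρ1 : 2 * c * ζ ≤ ρ) (hρ2 : ρ ≤ Cbar * ζ)
    (s : ℝ → ℝ) (hs : IsShrinkage ρ s) :
    ‖(Matrix.of fun i j : Fin p => s (σcheck i j) - σ i j)‖ ≤
      ((Cbar + c) * c ^ (-q) + (Cbar + c) ^ (1 - q)) * S * ζ ^ (1 - q) :=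
  shrinkage_spectral_norm_bound_general p q hq0 hq1 ζ c Cbar S hζ hc hS σ σcheck hσsymm hσchecksymm
    hclose hsparse ρ hρ1 hρ2 s hs
end

section
/- Let L : ℝ → ℝ satisfy 0 ≤ L(x) ≤ L̄ for all x and L(x) = 0 whenever |x| > 1. Let n ≥ 1 be an integer, c̄ > 0, and let t_0 < t_1 < ⋯ < t_n be real numbers with t_j − t_{j−1} ≤ c̄/n for every j. Then for every t ∈ ℝ and every b > 0, ∑_{j=1}^n (t_j − t_{j−1}) · L_b(t_j − t) ≤ L̄ · (2b + c̄/n) / b = 2 L̄ + L̄ c̄ / (n b). -/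
/-!
Only the indices `j` with `|t j - x| ≤ b` contribute, each at most `L̄ / b` times its increment.
Those indices lie in a block `j₀ .. j₁`, whose increments telescope to
`t j₁ - t (j₀ - 1) = (t j₁ - t j₀) + (t j₀ - t (j₀ - 1)) ≤ 2 b + c̄ / n`.
-/

open Finset

theorem Finset.sum_Icc_succ_sub_pred {G : Type*} [AddCommGroup G] (f : ℕ → G) {m k : ℕ}
    (hmk : m ≤ k) : ∑ j ∈ Icc (m + 1) k, (f j - f (j - 1)) = f k - f m := by
  rw [← Ico_add_one_right_eq_Icc, ← sum_Ico_add', ← sum_Ico_sub f hmk]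
  simp only [Nat.add_sub_cancel]

theorem sum_increments_filter_abs_sub_le {t : ℕ → ℝ} {n : ℕ} {δ : ℝ}
    (hmono : ∀ j, 1 ≤ j → j ≤ n → t (j - 1) ≤ t j)
    (hmesh : ∀ j, 1 ≤ j → j ≤ n → t j - t (j - 1) ≤ δ) (hδ : 0 ≤ δ)
    (x : ℝ) {r : ℝ} (hr : 0 ≤ r) :
    ∑ j ∈ (Icc 1 n).filter (fun j => |t j - x| ≤ r), (t j - t (j - 1)) ≤ 2 * r + δ := by
  set S := (Icc 1 n).filter (fun j => |t j - x| ≤ r)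
  rcases S.eq_empty_or_nonempty with hS | hS
  · rw [hS, sum_empty]
    positivity
  obtain ⟨hj₀, hx₀⟩ := mem_filter.mp (S.min'_mem hS)
  obtain ⟨hj₁, hx₁⟩ := mem_filter.mp (S.max'_mem hS)
  obtain ⟨m, hm⟩ : ∃ m, S.min' hS = m + 1 := Nat.exists_eq_add_one.mpr (mem_Icc.mp hj₀).1
  have hsub : S ⊆ Icc (m + 1) (S.max' hS) := fun j hj =>
    mem_Icc.mpr ⟨hm ▸ S.min'_le j hj, S.le_max' j hj⟩
  have hincr_nonneg : ∀ j ∈ Icc (m + 1) (S.max' hS), 0 ≤ t j - t (j - 1) := fun j hj => by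
    obtain ⟨hmj, hjk⟩ := mem_Icc.mp hj
    obtain ⟨-, hkn⟩ := mem_Icc.mp hj₁
    exact sub_nonneg.mpr (hmono j (by omega) (by omega))
  have hmk : m ≤ S.max' hS := by have := S.min'_le_max' hS; omega
  calc ∑ j ∈ S, (t j - t (j - 1))
      ≤ ∑ j ∈ Icc (m + 1) (S.max' hS), (t j - t (j - 1)) :=
        sum_le_sum_of_subset_of_nonneg hsub fun j hj _ => hincr_nonneg j hj
    _ = (t (S.max' hS) - t (S.min' hS)) + (t (m + 1) - t m) := by
        rw [sum_Icc_succ_sub_pred t hmk, hm]; ring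
    _ ≤ 2 * r + δ := by
        have hgap := hmesh (m + 1) (by omega) (by have := mem_Icc.mp hj₀; omega)
        rw [Nat.add_sub_cancel] at hgap
        linarith [abs_le.mp hx₀, abs_le.mp hx₁]

theorem mul_rescaled_kernel_le_ite {L : ℝ → ℝ} {Lbar : ℝ} (hL : ∀ x, 0 ≤ L x ∧ L x ≤ Lbar)
    (hsupp : ∀ x, 1 < |x| → L x = 0) {b : ℝ} (hb : 0 < b) {w : ℝ} (hw : 0 ≤ w) (u : ℝ) :
    w * (b⁻¹ * L (u / b)) ≤ b⁻¹ * Lbar * if |u| ≤ b then w else 0 := by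
  split_ifs with hu
  · have := (hL (u / b)).2
    calc w * (b⁻¹ * L (u / b)) ≤ w * (b⁻¹ * Lbar) := by gcongr
      _ = _ := by ring
  · rw [hsupp _ (by rw [abs_div, abs_of_pos hb, one_lt_div hb]; exact not_le.mp hu)]
    simp

theorem kernel_weight_sum_bound_general
    (L : ℝ → ℝ) (Lbar : ℝ)
    (hL : ∀ x : ℝ, 0 ≤ L x ∧ L x ≤ Lbar)
    (hsupp : ∀ x : ℝ, 1 < |x| → L x = 0)
    (n : ℕ) (cbar : ℝ) (hcbar : 0 < cbar)
    (t : ℕ → ℝ)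
    (hmono : ∀ j : ℕ, 1 ≤ j → j ≤ n → t (j - 1) < t j)
    (hmesh : ∀ j : ℕ, 1 ≤ j → j ≤ n → t j - t (j - 1) ≤ cbar / n)
    (x : ℝ) (b : ℝ) (hb : 0 < b) :
    ∑ j ∈ Finset.Icc 1 n, (t j - t (j - 1)) * (b⁻¹ * L ((t j - x) / b)) ≤
      Lbar * (2 * b + cbar / n) / b := by
  have hLbar : 0 ≤ Lbar := (hL 0).1.trans (hL 0).2
  have hmono' : ∀ j, 1 ≤ j → j ≤ n → t (j - 1) ≤ t j := fun j h₁ h₂ => (hmono j h₁ h₂).le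
  calc ∑ j ∈ Icc 1 n, (t j - t (j - 1)) * (b⁻¹ * L ((t j - x) / b))
      ≤ ∑ j ∈ Icc 1 n, b⁻¹ * Lbar * if |t j - x| ≤ b then t j - t (j - 1) else 0 := by
        refine sum_le_sum fun j hj => mul_rescaled_kernel_le_ite hL hsupp hb ?_ _
        obtain ⟨h₁, h₂⟩ := mem_Icc.mp hj
        exact sub_nonneg.mpr (hmono' j h₁ h₂)
    _ = b⁻¹ * Lbar * ∑ j ∈ (Icc 1 n).filter (fun j => |t j - x| ≤ b), (t j - t (j - 1)) := by
        rw [← mul_sum, sum_filter]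
    _ ≤ b⁻¹ * Lbar * (2 * b + cbar / n) := by
        gcongr
        exact sum_increments_filter_abs_sub_le hmono' hmesh (by positivity) x hb.le
    _ = Lbar * (2 * b + cbar / n) / b := by ring

/-- Kernel weight sum bound: if `0 ≤ L ≤ L̄`, `L` vanishes outside `[-1,1]`, and the grid
`t_0 < t_1 < ⋯ < t_n` has mesh at most `c̄ / n`, then for every point `x` and bandwidth `b > 0`,
`∑_{j=1}^n (t_j - t_{j-1}) L_b(t_j - x) ≤ L̄ (2b + c̄/n) / b`, where `L_b(u) = b⁻¹ L(u/b)`. -/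
theorem kernel_weight_sum_bound
    (L : ℝ → ℝ) (Lbar : ℝ)
    (hL : ∀ x : ℝ, 0 ≤ L x ∧ L x ≤ Lbar)
    (hsupp : ∀ x : ℝ, 1 < |x| → L x = 0)
    (n : ℕ) (hn : 1 ≤ n) (cbar : ℝ) (hcbar : 0 < cbar)
    (t : ℕ → ℝ)
    (hmono : ∀ j : ℕ, 1 ≤ j → j ≤ n → t (j - 1) < t j)
    (hmesh : ∀ j : ℕ, 1 ≤ j → j ≤ n → t j - t (j - 1) ≤ cbar / n)
    (x : ℝ) (b : ℝ) (hb : 0 < b) :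
    ∑ j ∈ Finset.Icc 1 n, (t j - t (j - 1)) * (b⁻¹ * L ((t j - x) / b)) ≤
      Lbar * (2 * b + cbar / n) / b :=
  kernel_weight_sum_bound_general L Lbar hL hsupp n cbar hcbar t hmono hmesh x b hb
end

section
/- Let L : ℝ → ℝ be Lipschitz with constant ℓ (|L(x) − L(y)| ≤ ℓ |x − y| for all x, y) and satisfy L(x) = 0 whenever |x| > 1. Let n ≥ 1 be an integer and 0 < c̲ ≤ c̄, and let t_0 < t_1 < ⋯ < t_n be real numbers with c̲/n ≤ t_j − t_{j−1} ≤ c̄/n for every j. Then for every t ∈ ℝ and every b > 0, ∑_{j=1}^n ∫_{t_{j−1}}^{t_j} |L_b(t_j − t) − L_b(s − t)| ds ≤ ℓ c̄² / (c̲ n b) + ℓ c̄² / (n² b²). -/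
/-!
On `[t_{j-1}, t_j]` the Lipschitz bound gives `|L_b(t_j - x) - L_b(s - x)| ≤ ℓ (t_j - s) / b²`,
so the `j`-th integral is at most `ℓ (t_j - t_{j-1})² / (2b²) ≤ ℓ c̄ (t_j - t_{j-1}) / (2nb²)`.
It vanishes unless `[t_{j-1}, t_j]` meets `[x - b, x + b]`, and then the whole interval lies in
`I = [x - b - c̄/n, x + b + c̄/n]`. Clamping the grid to `I` turns every surviving gap into a gap of
the clamped grid, whose gaps telescope to at most `|I| = 2b + 2c̄/n`. Finally `c̄ / c̲ ≥ 1`.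
-/

open Finset

noncomputable def rescaledKernel (L : ℝ → ℝ) (b u : ℝ) : ℝ := b⁻¹ * L (u / b)

theorem Finset.sum_Icc_one_sub_pred {M : Type*} [AddCommGroup M] (u : ℕ → M) (n : ℕ) :
    ∑ j ∈ Icc 1 n, (u j - u (j - 1)) = u n - u 0 := by
  induction n with
  | zero => simp
  | succ n ih =>
    rw [sum_Icc_succ_top (by omega), ih, Nat.add_sub_cancel]
    abel

theorem max_min_sub_max_min {A C a c : ℝ} (hAa : A ≤ a) (hac : a ≤ c) (hcC : c ≤ C) :
    max A (min C c) - max A (min C a) = c - a := by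
  rw [min_eq_right hcC, min_eq_right (hac.trans hcC), max_eq_right hAa,
    max_eq_right (hAa.trans hac)]

section LipschitzKernel

variable {L : ℝ → ℝ} {ℓ a b c x : ℝ}

theorem nonneg_of_abs_sub_le_mul (hLip : ∀ x y : ℝ, |L x - L y| ≤ ℓ * |x - y|) : 0 ≤ ℓ := by
  simpa using (abs_nonneg _).trans (hLip 1 0)

theorem continuous_of_abs_sub_le_mul (hLip : ∀ x y : ℝ, |L x - L y| ≤ ℓ * |x - y|) :
    Continuous L :=
  (LipschitzWith.of_dist_le_mul (K := ℓ.toNNReal) fun x y => by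
    simpa [Real.dist_eq, Real.coe_toNNReal ℓ (nonneg_of_abs_sub_le_mul hLip)] using
      hLip x y).continuous

theorem abs_rescaledKernel_sub_le (hLip : ∀ x y : ℝ, |L x - L y| ≤ ℓ * |x - y|) (hb : 0 < b)
    (u v : ℝ) : |rescaledKernel L b u - rescaledKernel L b v| ≤ ℓ / b ^ 2 * |u - v| :=
  calc |b⁻¹ * L (u / b) - b⁻¹ * L (v / b)| = b⁻¹ * |L (u / b) - L (v / b)| := by
        rw [← mul_sub, abs_mul, abs_of_pos (inv_pos.2 hb)]
    _ ≤ b⁻¹ * (ℓ * |u / b - v / b|) := by gcongr; exact hLip _ _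
    _ = ℓ / b ^ 2 * |u - v| := by
        rw [← sub_div, abs_div, abs_of_pos hb]
        field_simp

theorem rescaledKernel_eq_zero (hsupp : ∀ x : ℝ, 1 < |x| → L x = 0) (hb : 0 < b) {u : ℝ}
    (hu : b < |u|) : rescaledKernel L b u = 0 := by
  rw [rescaledKernel, hsupp _ (by rwa [abs_div, abs_of_pos hb, one_lt_div hb]), mul_zero]

theorem integral_abs_rescaledKernel_sub_le (hLip : ∀ x y : ℝ, |L x - L y| ≤ ℓ * |x - y|)
    (hb : 0 < b) (hac : a ≤ c) (x : ℝ) :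
    ∫ s in a..c, |rescaledKernel L b (c - x) - rescaledKernel L b (s - x)| ≤
      ℓ / (2 * b ^ 2) * (c - a) ^ 2 := by
  have hL := continuous_of_abs_sub_le_mul hLip
  calc ∫ s in a..c, |rescaledKernel L b (c - x) - rescaledKernel L b (s - x)|
      ≤ ∫ s in a..c, ℓ / b ^ 2 * (c - s) := by
        refine intervalIntegral.integral_mono_on hac
          (Continuous.intervalIntegrable (by unfold rescaledKernel; fun_prop) _ _)
          (Continuous.intervalIntegrable (by fun_prop) _ _) fun s hs => ?_
        simpa [abs_of_nonneg (sub_nonneg.2 hs.2)] using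
          abs_rescaledKernel_sub_le hLip hb (c - x) (s - x)
    _ = ℓ / (2 * b ^ 2) * (c - a) ^ 2 := by
        rw [intervalIntegral.integral_const_mul,
          intervalIntegral.integral_comp_sub_left (fun s => s), sub_self, integral_id]
        ring

theorem integral_abs_rescaledKernel_sub_eq_zero (hsupp : ∀ x : ℝ, 1 < |x| → L x = 0)
    (hb : 0 < b) (hac : a ≤ c) (hout : c < x - b ∨ x + b < a) :
    ∫ s in a..c, |rescaledKernel L b (c - x) - rescaledKernel L b (s - x)| = 0 := by
  have hfar : ∀ s ∈ Set.Icc a c, b < |s - x| := fun s hs =>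
    lt_abs.2 <| hout.elim (fun h => Or.inr (by linarith [hs.2])) fun h => Or.inl (by linarith [hs.1])
  rw [intervalIntegral.integral_congr (g := fun _ => 0), intervalIntegral.integral_zero]
  intro s hs
  rw [Set.uIcc_of_le hac] at hs
  simp [rescaledKernel_eq_zero hsupp hb (hfar s hs),
    rescaledKernel_eq_zero hsupp hb (hfar c ⟨hac, le_rfl⟩)]

theorem integral_abs_rescaledKernel_sub_le_clamp (hLip : ∀ x y : ℝ, |L x - L y| ≤ ℓ * |x - y|)
    (hsupp : ∀ x : ℝ, 1 < |x| → L x = 0) (hb : 0 < b) (hac : a ≤ c) {g : ℝ} (hg : c - a ≤ g)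
    (x : ℝ) :
    ∫ s in a..c, |rescaledKernel L b (c - x) - rescaledKernel L b (s - x)| ≤
      ℓ * g / (2 * b ^ 2) *
        (max (x - b - g) (min (x + b + g) c) - max (x - b - g) (min (x + b + g) a)) := by
  have hℓ := nonneg_of_abs_sub_le_mul hLip
  have hca : 0 ≤ c - a := sub_nonneg.2 hac
  have hg0 : 0 ≤ g := hca.trans hg
  by_cases hout : c < x - b ∨ x + b < a
  · rw [integral_abs_rescaledKernel_sub_eq_zero hsupp hb hac hout]
    exact mul_nonneg (by positivity) (sub_nonneg.2 (max_le_max le_rfl (min_le_min le_rfl hac)))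
  simp only [not_or, not_lt] at hout
  rw [max_min_sub_max_min (by linarith) hac (by linarith)]
  calc _ ≤ ℓ / (2 * b ^ 2) * (c - a) * (c - a) := by
        simpa [sq, mul_assoc] using integral_abs_rescaledKernel_sub_le hLip hb hac x
    _ ≤ ℓ / (2 * b ^ 2) * (c - a) * g := mul_le_mul_of_nonneg_left hg (by positivity)
    _ = ℓ * g / (2 * b ^ 2) * (c - a) := by ring

end LipschitzKernel

theorem kernel_weight_riemann_error_bound_general
    (L : ℝ → ℝ) (ℓ : ℝ)
    (hLip : ∀ x y : ℝ, |L x - L y| ≤ ℓ * |x - y|)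
    (hsupp : ∀ x : ℝ, 1 < |x| → L x = 0)
    (n : ℕ) (clow cbar : ℝ) (hclow : 0 < clow) (hcc : clow ≤ cbar)
    (t : ℕ → ℝ)
    (hgap_low : ∀ j : ℕ, 1 ≤ j → j ≤ n → clow / n ≤ t j - t (j - 1))
    (hgap_up : ∀ j : ℕ, 1 ≤ j → j ≤ n → t j - t (j - 1) ≤ cbar / n)
    (x : ℝ) (b : ℝ) (hb : 0 < b) :
    ∑ j ∈ Finset.Icc 1 n,
        (∫ s in (t (j - 1))..(t j), |b⁻¹ * L ((t j - x) / b) - b⁻¹ * L ((s - x) / b)|) ≤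
      ℓ * cbar ^ 2 / (clow * n * b) + ℓ * cbar ^ 2 / (n ^ 2 * b ^ 2) := by
  have hℓ := nonneg_of_abs_sub_le_mul hLip
  have hcbar : 0 ≤ cbar := hclow.le.trans hcc
  set g := cbar / n
  have hg : 0 ≤ g := by positivity
  set u : ℕ → ℝ := fun j => max (x - b - g) (min (x + b + g) (t j))
  have hmono : ∀ j ∈ Icc 1 n, t (j - 1) ≤ t j := fun j hj => by
    have := hgap_low j (mem_Icc.1 hj).1 (mem_Icc.1 hj).2
    have : 0 ≤ clow / n := by positivity
    linarith
  calc _ ≤ ∑ j ∈ Icc 1 n, ℓ * g / (2 * b ^ 2) * (u j - u (j - 1)) :=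
        sum_le_sum fun j hj => integral_abs_rescaledKernel_sub_le_clamp hLip hsupp hb (hmono j hj)
          (hgap_up j (mem_Icc.1 hj).1 (mem_Icc.1 hj).2) x
    _ = ℓ * g / (2 * b ^ 2) * (u n - u 0) := by rw [← mul_sum, sum_Icc_one_sub_pred]
    _ ≤ ℓ * g / (2 * b ^ 2) * (2 * b + 2 * g) := by
        gcongr
        have : u n ≤ x + b + g := max_le (by linarith) (min_le_left _ _)
        have : x - b - g ≤ u 0 := le_max_left _ _
        linarith
    _ = ℓ * g / b + ℓ * g ^ 2 / b ^ 2 := by field_simp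
    _ = ℓ * cbar / (n * b) + ℓ * cbar ^ 2 / (n ^ 2 * b ^ 2) := by ring
    _ ≤ ℓ * cbar ^ 2 / (clow * n * b) + ℓ * cbar ^ 2 / (n ^ 2 * b ^ 2) := by
        gcongr ?_ + _
        calc ℓ * cbar / (n * b) = clow * (ℓ * cbar) / (clow * n * b) := by
              rw [mul_assoc clow, mul_div_mul_left _ _ hclow.ne']
          _ ≤ cbar * (ℓ * cbar) / (clow * n * b) := by gcongr
          _ = ℓ * cbar ^ 2 / (clow * n * b) := by ring

/-- Lipschitz kernel discretization bound: if `L` is `ℓ`-Lipschitz and vanishes outside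
`[-1,1]`, and the grid `t_0 < t_1 < ⋯ < t_n` has gaps between `c̲/n` and `c̄/n`, then for
every point `x` and bandwidth `b > 0`,
`∑_{j=1}^n ∫_{t_{j-1}}^{t_j} |L_b(t_j - x) - L_b(s - x)| ds ≤ ℓ c̄²/(c̲ n b) + ℓ c̄²/(n² b²)`,
where `L_b(u) = b⁻¹ L(u/b)`. -/
theorem kernel_weight_riemann_error_bound
    (L : ℝ → ℝ) (ℓ : ℝ)
    (hLip : ∀ x y : ℝ, |L x - L y| ≤ ℓ * |x - y|)
    (hsupp : ∀ x : ℝ, 1 < |x| → L x = 0)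
    (n : ℕ) (hn : 1 ≤ n) (clow cbar : ℝ) (hclow : 0 < clow) (hcc : clow ≤ cbar)
    (t : ℕ → ℝ)
    (hgap_low : ∀ j : ℕ, 1 ≤ j → j ≤ n → clow / n ≤ t j - t (j - 1))
    (hgap_up : ∀ j : ℕ, 1 ≤ j → j ≤ n → t j - t (j - 1) ≤ cbar / n)
    (x : ℝ) (b : ℝ) (hb : 0 < b) :
    ∑ j ∈ Finset.Icc 1 n,
        (∫ s in (t (j - 1))..(t j), |b⁻¹ * L ((t j - x) / b) - b⁻¹ * L ((s - x) / b)|) ≤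
      ℓ * cbar ^ 2 / (clow * n * b) + ℓ * cbar ^ 2 / (n ^ 2 * b ^ 2) :=
  kernel_weight_riemann_error_bound_general L ℓ hLip hsupp n clow cbar hclow hcc t hgap_low hgap_up
    x b hb
end

section
/- Let (Ω, 𝓕, P) be a probability space with filtration (𝓕_j)_{j∈ℕ}, let n ∈ ℕ and v > 0, and let (M_j)_{0≤j≤n} be a real-valued martingale with respect to (𝓕_j). Suppose that for every ψ > 0 the random variable exp(ψ |M_n|) is integrable and E[exp(ψ |M_n|)] ≤ exp(ψ² v / 2). Then for every λ > 0, P( max_{0≤j≤n} |M_j| ≥ λ ) ≤ exp(−λ² / (2v)). -/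
/-!
For `ψ > 0` the map `x ↦ exp (ψ |x|)` is convex, so by the conditional Jensen inequality
`exp (ψ |M_j|)`, frozen after time `n` (only `M_n` is assumed to have exponential moments), is a
nonnegative submartingale. Doob's maximal inequality then bounds the probability of the event
by `e^{-ψλ} E[exp (ψ |M_n|)] ≤ exp (ψ² v / 2 - ψ λ)`, which is minimised at `ψ = λ / v`.
-/

open MeasureTheory Filter Set

namespace MeasureTheory

variable {Ω ι : Type*} {m : MeasurableSpace Ω} {μ : Measure Ω}

theorem submartingale_min_of_le_condExp [LinearOrder ι] {ℱ : Filtration ι m}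
    [SigmaFiniteFiltration μ ℱ] {f : ι → Ω → ℝ} (hadp : StronglyAdapted ℱ f)
    {n : ι} (hint : ∀ j ≤ n, Integrable (f j) μ)
    (hle : ∀ i j, i ≤ j → j ≤ n → f i ≤ᵐ[μ] μ[f j | ℱ i]) :
    Submartingale (fun j => f (min j n)) ℱ μ := by
  refine ⟨fun j => (hadp _).mono (ℱ.mono (min_le_left j n)), fun i j hij => ?_,
    fun j => hint _ (min_le_right j n)⟩
  rcases le_total i n with hin | hni
  · simpa only [min_eq_left hin] using hle i _ (le_min hij hin) (min_le_right j n)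
  · simp only [min_eq_right hni, min_eq_right (hni.trans hij)]
    rw [condExp_of_stronglyMeasurable (ℱ.le i) ((hadp n).mono (ℱ.mono hni)) (hint n le_rfl)]

section Jensen

variable {E : Type*} [NormedAddCommGroup E] [NormedSpace ℝ E] [CompleteSpace E]
  {M : ι → Ω → E} {φ : E → ℝ}

theorem Martingale.comp_ae_le_condExp [Preorder ι] {ℱ : Filtration ι m}
    [SigmaFiniteFiltration μ ℱ] (hM : Martingale M ℱ μ) (hφ : ConvexOn ℝ univ φ)
    (hφc : LowerSemicontinuous φ) {i k : ι} (hik : i ≤ k) (hk : Integrable (φ ∘ M k) μ) :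
    φ ∘ M i ≤ᵐ[μ] μ[φ ∘ M k | ℱ i] := by
  filter_upwards [hφ.map_condExp_le_univ (ℱ.le i) hφc (hM.integrable k) hk,
    hM.condExp_ae_eq hik] with ω hle heq
  simpa [heq] using hle

variable [IsFiniteMeasure μ]

theorem Martingale.integrable_comp_of_le [Preorder ι] {ℱ : Filtration ι m}
    (hM : Martingale M ℱ μ) (hφ : ConvexOn ℝ univ φ) (hφc : Continuous φ) {c : ℝ}
    (hφ_ge : ∀ x, c ≤ φ x) {i k : ι} (hik : i ≤ k) (hk : Integrable (φ ∘ M k) μ) :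
    Integrable (φ ∘ M i) μ :=
  integrable_of_le_of_le
    (hφc.comp_stronglyMeasurable ((hM.stronglyAdapted i).mono (ℱ.le i))).aestronglyMeasurable
    (ae_of_all _ fun ω => hφ_ge (M i ω))
    (hM.comp_ae_le_condExp hφ hφc.lowerSemicontinuous hik hk)
    (integrable_const c) integrable_condExp

theorem Martingale.submartingale_comp_min [LinearOrder ι] {ℱ : Filtration ι m}
    (hM : Martingale M ℱ μ) (hφ : ConvexOn ℝ univ φ) (hφc : Continuous φ) {c : ℝ}
    (hφ_ge : ∀ x, c ≤ φ x) {n : ι} (hn : Integrable (φ ∘ M n) μ) :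
    Submartingale (fun j => φ ∘ M (min j n)) ℱ μ :=
  submartingale_min_of_le_condExp
    (fun j => hφc.comp_stronglyMeasurable (hM.stronglyAdapted j))
    (fun _ hj => hM.integrable_comp_of_le hφ hφc hφ_ge hj hn)
    (fun _ _ hij hj => hM.comp_ae_le_condExp hφ hφc.lowerSemicontinuous hij
      (hM.integrable_comp_of_le hφ hφc hφ_ge hj hn))

end Jensen

theorem Submartingale.measure_exists_le_le_integral_div [IsFiniteMeasure μ]
    {ℱ : Filtration ℕ m} {f : ℕ → Ω → ℝ} (hsub : Submartingale f ℱ μ)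
    (hnonneg : 0 ≤ f) {ε : ℝ} (hε : 0 < ε) (n : ℕ) :
    μ {ω | ∃ j ≤ n, ε ≤ f j ω} ≤ ENNReal.ofReal ((∫ ω, f n ω ∂μ) / ε) := by
  have hset : {ω | ∃ j ≤ n, ε ≤ f j ω} = {ω | ((ε.toNNReal : NNReal) : ℝ) ≤
      (Finset.range (n + 1)).sup' Finset.nonempty_range_add_one fun k => f k ω} := by
    ext ω
    simp [Finset.le_sup'_iff, hε.le]
  have hmax := maximal_ineq hsub hnonneg (ε := ε.toNNReal) n
  rw [← hset] at hmax
  rw [ENNReal.ofReal_div_of_pos hε,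
    ENNReal.le_div_iff_mul_le (.inl (by simpa using hε)) (.inl ENNReal.ofReal_ne_top), mul_comm]
  calc ENNReal.ofReal ε * μ {ω | ∃ j ≤ n, ε ≤ f j ω}
      ≤ ENNReal.ofReal (∫ ω in {ω | ∃ j ≤ n, ε ≤ f j ω}, f n ω ∂μ) := hmax
    _ ≤ ENNReal.ofReal (∫ ω, f n ω ∂μ) :=
      ENNReal.ofReal_le_ofReal (setIntegral_le_integral (hsub.integrable n)
        (ae_of_all _ (hnonneg n)))

end MeasureTheory

theorem convexOn_exp_mul_norm {E : Type*} [NormedAddCommGroup E] [NormedSpace ℝ E] {ψ : ℝ}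
    (hψ : 0 ≤ ψ) : ConvexOn ℝ univ fun x : E => Real.exp (ψ * ‖x‖) :=
  (convexOn_exp.subset (subset_univ _) (isPreconnected_univ.image _
    (by fun_prop : Continuous fun x : E => ψ • ‖x‖).continuousOn).ordConnected.convex).comp
    (convexOn_univ_norm.smul hψ) (Real.exp_monotone.monotoneOn _)

/-- Doob-type maximal inequality from an exponential moment bound on the terminal value:
if `(M_j)_{0 ≤ j ≤ n}` is a martingale and `E[exp(ψ |M_n|)] ≤ exp(ψ² v / 2)` for every
`ψ > 0`, then `P(max_{0 ≤ j ≤ n} |M_j| ≥ λ) ≤ exp(-λ²/(2v))` for every `λ > 0`. -/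
theorem martingale_maximal_exponential_bound
    {Ω : Type*} {m : MeasurableSpace Ω} {P : Measure Ω} [IsProbabilityMeasure P]
    (ℱ : Filtration ℕ m) (n : ℕ) (v : ℝ) (hv : 0 < v)
    (M : ℕ → Ω → ℝ) (hM : Martingale M ℱ P)
    (hint : ∀ ψ : ℝ, 0 < ψ → Integrable (fun ω => Real.exp (ψ * |M n ω|)) P)
    (hmgf : ∀ ψ : ℝ, 0 < ψ →
      ∫ ω, Real.exp (ψ * |M n ω|) ∂P ≤ Real.exp (ψ ^ 2 * v / 2))
    (lam : ℝ) (hlam : 0 < lam) :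
    P {ω | ∃ j ≤ n, lam ≤ |M j ω|} ≤ ENNReal.ofReal (Real.exp (-lam ^ 2 / (2 * v))) := by
  set ψ := lam / v with hψ_def
  have hψ : 0 < ψ := div_pos hlam hv
  set φ : ℝ → ℝ := fun x => Real.exp (ψ * ‖x‖)
  have hφ_ge : ∀ x, 0 ≤ φ x := fun x => (Real.exp_pos _).le
  have hsub : Submartingale (fun j => φ ∘ M (min j n)) ℱ P :=
    hM.submartingale_comp_min (convexOn_exp_mul_norm hψ.le) (by fun_prop) hφ_ge (hint ψ hψ)
  have hlevel : {ω | ∃ j ≤ n, lam ≤ |M j ω|} ⊆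
      {ω | ∃ j ≤ n, Real.exp (ψ * lam) ≤ (φ ∘ M (min j n)) ω} := by
    rintro ω ⟨j, hj, hle⟩
    exact ⟨j, hj, by simpa [φ, min_eq_left hj] using mul_le_mul_of_nonneg_left hle hψ.le⟩
  calc P {ω | ∃ j ≤ n, lam ≤ |M j ω|}
      ≤ ENNReal.ofReal ((∫ ω, φ (M (min n n) ω) ∂P) / Real.exp (ψ * lam)) :=
        (measure_mono hlevel).trans
          (hsub.measure_exists_le_le_integral_div (fun _ _ => hφ_ge _) (Real.exp_pos _) n)
    _ ≤ ENNReal.ofReal (Real.exp (ψ ^ 2 * v / 2) / Real.exp (ψ * lam)) := by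
        gcongr
        simpa [φ] using hmgf ψ hψ
    _ = ENNReal.ofReal (Real.exp (-lam ^ 2 / (2 * v))) := by
        rw [← Real.exp_sub, hψ_def]
        congr 2
        field_simp
        ring
end
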